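/- arXiv:1009.3383 — 7 statements merged into one kernel-verified Lean document; each statement's English description precedes it below -/
import Mathlib

section
/- Let Γ be a group of affine isometries of a nondegenerate symmetric bilinear form on ℝⁿ satisfying: each element has the form (I+A,v) with ⟨Ax,y⟩=-⟨x,Ay⟩, A²=0, and for any two elements A₁A₂A₃ = 0 for any three elements. Then the following are equivalent: (1) the linear parts of all elements of Γ pairwise commute; (2) for all (I+A₁,v₁),(I+A₂,v₂) ∈ Γ one has A₁A₂ = 0; (3) the subspace U_Γ = Σ_{γ∈Γ} im A is totally isotropic. -/
/-!
Writing the linear parts as `1 + A`, the linear part of `γ₁γ₂` is `1 + (A₁A₂ + A₁ + A₂)`.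
Squaring this nilpotent element and using `A² = 0` and the vanishing of triple products leaves
`A₁A₂ + A₂A₁ = 0`. Hence the linear parts commute iff `A₁A₂ = A₂A₁` iff `A₁A₂ = 0`. Finally,
skew-adjointness gives `⟨A₁A₂x, y⟩ = -⟨A₂x, A₁y⟩`, so by nondegeneracy `A₁A₂ = 0` for all pairs
exactly when the images of the `A`'s are mutually orthogonal.
-/

section Ring

variable {R : Type*} [Ring R] {a b : R}

theorem mul_add_mul_eq_zero_of_mul_self_eq_zero (ha : a * a = 0) (hb : b * b = 0)
    (haba : a * (b * a) = 0) (hbab : b * (a * b) = 0)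
    (hsum : (a * b + a + b) * (a * b + a + b) = 0) : a * b + b * a = 0 := by
  have expand : (a * b + a + b) * (a * b + a + b) = a * b + b * a + a * (b * a) * b + a * (b * a)
      + a * (b * b) + a * a * b + a * a + b * (a * b) + b * b := by
    noncomm_ring
  simpa [ha, hb, haba, hbab, expand] using hsum

theorem commute_one_add_one_add_iff : Commute (1 + a) (1 + b) ↔ Commute a b := by
  refine ⟨fun h => ?_, fun h => (Commute.one_left _).add_left ((Commute.one_right a).add_right h)⟩
  simpa using (h.sub_left (Commute.one_left _)).sub_right (Commute.one_right _)

theorem commute_iff_mul_eq_zero_of_mul_add_mul_eq_zero [IsAddTorsionFree R]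
    (h : a * b + b * a = 0) : Commute a b ↔ a * b = 0 := by
  constructor
  · intro hc
    apply nsmul_right_injective (M := R) two_ne_zero
    change 2 • (a * b) = 2 • 0
    rw [smul_zero, two_nsmul]
    nth_rewrite 2 [hc.eq]
    exact h
  · intro hab
    rw [hab, zero_add] at h
    exact hab.trans h.symm

end Ring

namespace AffineEquiv

variable {k V P : Type*} [Ring k] [AddCommGroup V] [Module k V] [AddTorsor V P]
  {A : (P ≃ᵃ[k] P) → Module.End k V}

theorem linear_eq_one_add (hA : ∀ γ, A γ = (γ.linear : V →ₗ[k] V) - LinearMap.id)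
    (γ : P ≃ᵃ[k] P) : (γ.linear : Module.End k V) = 1 + A γ := by
  rw [hA, Module.End.one_eq_id]
  abel

theorem linear_sub_id_mul (hA : ∀ γ, A γ = (γ.linear : V →ₗ[k] V) - LinearMap.id)
    (γ₁ γ₂ : P ≃ᵃ[k] P) : A (γ₁ * γ₂) = A γ₁ * A γ₂ + A γ₁ + A γ₂ := by
  calc A (γ₁ * γ₂) = (1 + A (γ₁ * γ₂)) - 1 := by abel
    _ = (1 + A γ₁) * (1 + A γ₂) - 1 := by
      rw [← linear_eq_one_add hA, ← linear_eq_one_add hA, ← linear_eq_one_add hA]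
      rfl
    _ = A γ₁ * A γ₂ + A γ₁ + A γ₂ := by noncomm_ring

end AffineEquiv

namespace LinearMap.BilinForm

variable {R M : Type*} [CommRing R] [AddCommGroup M] [Module R M] {B : LinearMap.BilinForm R M}

theorem mul_eq_zero_of_apply_range_eq_zero (hB : B.SeparatingLeft) {f g : Module.End R M}
    (hf : ∀ x y, B (f x) y = -B x (f y)) (hfg : ∀ x y, B (g x) (f y) = 0) : f * g = 0 := by
  ext x
  refine hB _ fun y => ?_
  rw [Module.End.mul_apply, hf, hfg, neg_zero]

theorem apply_eq_zero_of_mem_iSup_range {ι : Type*} {s : Set ι} {f : ι → Module.End R M}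
    (hf : ∀ i ∈ s, ∀ x y, B (f i x) y = -B x (f i y)) (hff : ∀ i ∈ s, ∀ j ∈ s, f i * f j = 0)
    {u u' : M} (hu : u ∈ ⨆ i ∈ s, range (f i)) (hu' : u' ∈ ⨆ i ∈ s, range (f i)) :
    B u u' = 0 := by
  have range_orth : ∀ i ∈ s, ∀ x, (⨆ j ∈ s, range (f j)) ≤ ker (B (f i x)) := by
    refine fun i hi x => iSup₂_le fun j hj => range_le_ker_iff.mpr ?_
    ext z
    rw [LinearMap.comp_apply, hf i hi, ← Module.End.mul_apply, hff i hi j hj,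
      LinearMap.zero_apply, map_zero, neg_zero, LinearMap.zero_apply]
  have le_ker : (⨆ i ∈ s, range (f i)) ≤ ker (B.flip u') := by
    refine iSup₂_le fun i hi => ?_
    rintro _ ⟨x, rfl⟩
    exact range_orth i hi x hu'
  exact le_ker hu

theorem forall_mul_eq_zero_iff_isotropic (hB : B.SeparatingLeft) {ι : Type*} {s : Set ι}
    {f : ι → Module.End R M} (hf : ∀ i ∈ s, ∀ x y, B (f i x) y = -B x (f i y)) :
    (∀ i ∈ s, ∀ j ∈ s, f i * f j = 0) ↔
      ∀ u ∈ ⨆ i ∈ s, range (f i), ∀ u' ∈ ⨆ i ∈ s, range (f i), B u u' = 0 := by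
  have mem : ∀ i ∈ s, ∀ x, f i x ∈ ⨆ i ∈ s, range (f i) := fun i hi x =>
    Submodule.mem_iSup_of_mem i (Submodule.mem_iSup_of_mem hi (mem_range_self _ x))
  refine ⟨fun h _ hu _ hu' => apply_eq_zero_of_mem_iSup_range hf h hu hu', fun h i hi j hj => ?_⟩
  exact mul_eq_zero_of_apply_range_eq_zero hB (hf i hi) fun x y => h _ (mem j hj x) _ (mem i hi y)

end LinearMap.BilinForm

theorem stmt4_general {n : ℕ}
    (B : LinearMap.BilinForm ℝ (Fin n → ℝ))
    (hnd : B.Nondegenerate)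
    (Γ : Subgroup ((Fin n → ℝ) ≃ᵃ[ℝ] (Fin n → ℝ)))
    (A : ((Fin n → ℝ) ≃ᵃ[ℝ] (Fin n → ℝ)) → ((Fin n → ℝ) →ₗ[ℝ] (Fin n → ℝ)))
    (hA : ∀ γ, A γ = (γ.linear : (Fin n → ℝ) →ₗ[ℝ] (Fin n → ℝ)) - LinearMap.id)
    (hskew : ∀ γ ∈ Γ, ∀ x y, B (A γ x) y = - B x (A γ y))
    (hA2 : ∀ γ ∈ Γ, A γ ∘ₗ A γ = 0)
    (htriple : ∀ γ₁ ∈ Γ, ∀ γ₂ ∈ Γ, ∀ γ₃ ∈ Γ, A γ₁ ∘ₗ A γ₂ ∘ₗ A γ₃ = 0) :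
    ((∀ γ₁ ∈ Γ, ∀ γ₂ ∈ Γ,
        γ₁.linear.toLinearMap ∘ₗ γ₂.linear.toLinearMap
          = γ₂.linear.toLinearMap ∘ₗ γ₁.linear.toLinearMap)
      ↔ (∀ γ₁ ∈ Γ, ∀ γ₂ ∈ Γ, A γ₁ ∘ₗ A γ₂ = 0)) ∧
    ((∀ γ₁ ∈ Γ, ∀ γ₂ ∈ Γ, A γ₁ ∘ₗ A γ₂ = 0)
      ↔ (∀ u ∈ (⨆ γ ∈ Γ, LinearMap.range (A γ) : Submodule ℝ (Fin n → ℝ)),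
          ∀ u' ∈ (⨆ γ ∈ Γ, LinearMap.range (A γ) : Submodule ℝ (Fin n → ℝ)),
            B u u' = 0)) := by
  have anticomm : ∀ γ₁ ∈ Γ, ∀ γ₂ ∈ Γ, A γ₁ * A γ₂ + A γ₂ * A γ₁ = 0 := fun γ₁ h₁ γ₂ h₂ =>
    mul_add_mul_eq_zero_of_mul_self_eq_zero (hA2 γ₁ h₁) (hA2 γ₂ h₂)
      (htriple γ₁ h₁ γ₂ h₂ γ₁ h₁) (htriple γ₂ h₂ γ₁ h₁ γ₂ h₂)
      (AffineEquiv.linear_sub_id_mul hA γ₁ γ₂ ▸ hA2 _ (mul_mem h₁ h₂))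
  have : IsAddTorsionFree (Module.End ℝ (Fin n → ℝ)) := .of_module_nnrat _
  refine ⟨forall₂_congr fun γ₁ h₁ => forall₂_congr fun γ₂ h₂ => ?_,
    LinearMap.BilinForm.forall_mul_eq_zero_iff_isotropic hnd.1 hskew⟩
  change Commute (γ₁.linear : Module.End ℝ (Fin n → ℝ)) γ₂.linear ↔ A γ₁ * A γ₂ = 0
  rw [AffineEquiv.linear_eq_one_add hA, AffineEquiv.linear_eq_one_add hA,
    commute_one_add_one_add_iff]
  exact commute_iff_mul_eq_zero_of_mul_add_mul_eq_zero (anticomm γ₁ h₁ γ₂ h₂)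

/-- For a group `Γ` of affine isometries of a nondegenerate symmetric bilinear
form on `ℝⁿ`, all of the form `(I+A, v)` with `A` skew-symmetric, `A² = 0`
and vanishing triple products, the following are equivalent:
(1) the linear parts pairwise commute (abelian linear holonomy);
(2) `A₁A₂ = 0` for any two elements;
(3) `U_Γ = Σ_{γ∈Γ} im A` is totally isotropic. -/
theorem stmt4 {n : ℕ}
    (B : LinearMap.BilinForm ℝ (Fin n → ℝ))
    (hsymm : ∀ x y, B x y = B y x)
    (hnd : B.Nondegenerate)
    (Γ : Subgroup ((Fin n → ℝ) ≃ᵃ[ℝ] (Fin n → ℝ)))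
    (A : ((Fin n → ℝ) ≃ᵃ[ℝ] (Fin n → ℝ)) → ((Fin n → ℝ) →ₗ[ℝ] (Fin n → ℝ)))
    (hA : ∀ γ, A γ = (γ.linear : (Fin n → ℝ) →ₗ[ℝ] (Fin n → ℝ)) - LinearMap.id)
    (hiso : ∀ γ ∈ Γ, ∀ x y, B (γ.linear x) (γ.linear y) = B x y)
    (hskew : ∀ γ ∈ Γ, ∀ x y, B (A γ x) y = - B x (A γ y))
    (hA2 : ∀ γ ∈ Γ, A γ ∘ₗ A γ = 0)
    (htriple : ∀ γ₁ ∈ Γ, ∀ γ₂ ∈ Γ, ∀ γ₃ ∈ Γ, A γ₁ ∘ₗ A γ₂ ∘ₗ A γ₃ = 0) :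
    ((∀ γ₁ ∈ Γ, ∀ γ₂ ∈ Γ,
        γ₁.linear.toLinearMap ∘ₗ γ₂.linear.toLinearMap
          = γ₂.linear.toLinearMap ∘ₗ γ₁.linear.toLinearMap)
      ↔ (∀ γ₁ ∈ Γ, ∀ γ₂ ∈ Γ, A γ₁ ∘ₗ A γ₂ = 0)) ∧
    ((∀ γ₁ ∈ Γ, ∀ γ₂ ∈ Γ, A γ₁ ∘ₗ A γ₂ = 0)
      ↔ (∀ u ∈ (⨆ γ ∈ Γ, LinearMap.range (A γ) : Submodule ℝ (Fin n → ℝ)),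
          ∀ u' ∈ (⨆ γ ∈ Γ, LinearMap.range (A γ) : Submodule ℝ (Fin n → ℝ)),
            B u u' = 0)) :=
  stmt4_general B hnd Γ A hA hskew hA2 htriple
end

section
/- Crossover rule: Let Ĩ be an invertible symmetric matrix and B₁, B₂ matrices with columns b₁ⁱ, b₂ⁱ such that B₁ᵀĨB₁ = 0, B₂ᵀĨB₂ = 0, and B₁ᵀĨB₂ is skew-symmetric. If ⟨b₁ⁱ, b₂ᵏ⟩_Ĩ ≠ 0 for some i ≠ k, then the four vectors b₁ᵏ, b₁ⁱ, b₂ᵏ, b₂ⁱ are linearly independent. -/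
open Matrix

lemma stmt9_key {k m : ℕ} (Itil : Matrix (Fin m) (Fin m) ℝ)
    (A C : Matrix (Fin m) (Fin k) ℝ) (a b : Fin k) :
    (fun r => A r a) ⬝ᵥ Itil.mulVec (fun r => C r b) = (Aᵀ * Itil * C) a b := by
  simp only [Matrix.mul_apply, dotProduct, Matrix.mulVec, Matrix.transpose_apply,
    Finset.sum_mul, Finset.mul_sum]
  rw [Finset.sum_comm]
  apply Finset.sum_congr rfl
  intro x _
  apply Finset.sum_congr rfl
  intro y _
  ring

/-- Crossover rule: if `B₁ᵀĨB₁ = 0`, `B₂ᵀĨB₂ = 0`, `B₁ᵀĨB₂` is skew-symmetric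
and `⟨b₁ⁱ, b₂ᵏ⟩_Ĩ ≠ 0` for some `i ≠ k`, then the four columns
`b₁ᵏ, b₁ⁱ, b₂ᵏ, b₂ⁱ` are linearly independent. -/
theorem stmt9 {k m : ℕ} (Itil : Matrix (Fin m) (Fin m) ℝ)
    (hItilSymm : Itilᵀ = Itil) (hItilInv : IsUnit Itil.det)
    (B₁ B₂ : Matrix (Fin m) (Fin k) ℝ)
    (h₁ : B₁ᵀ * Itil * B₁ = 0) (h₂ : B₂ᵀ * Itil * B₂ = 0)
    (hskew : (B₁ᵀ * Itil * B₂)ᵀ = -(B₁ᵀ * Itil * B₂))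
    (i j : Fin k) (hij : i ≠ j)
    (hne : (fun r => B₁ r i) ⬝ᵥ Itil.mulVec (fun r => B₂ r j) ≠ 0) :
    LinearIndependent ℝ
      ![fun r => B₁ r j, fun r => B₁ r i, fun r => B₂ r j, fun r => B₂ r i] := by
  set S := B₁ᵀ * Itil * B₂ with hSdef
  set α := S i j with hαdef
  have hα : (fun r => B₁ r i) ⬝ᵥ Itil.mulVec (fun r => B₂ r j) = α := by
    rw [stmt9_key]
  have hαne : α ≠ 0 := by rwa [hα] at hne
  have hS21 : B₂ᵀ * Itil * B₁ = -S := by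
    rw [← hskew, Matrix.transpose_mul, Matrix.transpose_mul, Matrix.transpose_transpose,
      hItilSymm, Matrix.mul_assoc]
  -- skew entries
  have hSji : S j i = -α := by
    have h' := congrArg (fun M => M i j) hskew
    simp only [Matrix.transpose_apply, Matrix.neg_apply] at h'
    linarith
  have hSii : S i i = 0 := by
    have h' := congrArg (fun M => M i i) hskew
    simp only [Matrix.transpose_apply, Matrix.neg_apply] at h'
    linarith
  have hSjj : S j j = 0 := by
    have h' := congrArg (fun M => M j j) hskew
    simp only [Matrix.transpose_apply, Matrix.neg_apply] at h'
    linarith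
  -- pairings
  have e11 : ∀ a b : Fin k, (fun r => B₁ r a) ⬝ᵥ Itil.mulVec (fun r => B₁ r b) = 0 := by
    intro a b; rw [stmt9_key, h₁]; rfl
  have e22 : ∀ a b : Fin k, (fun r => B₂ r a) ⬝ᵥ Itil.mulVec (fun r => B₂ r b) = 0 := by
    intro a b; rw [stmt9_key, h₂]; rfl
  have e12 : ∀ a b : Fin k, (fun r => B₁ r a) ⬝ᵥ Itil.mulVec (fun r => B₂ r b) = S a b := by
    intro a b; rw [stmt9_key]
  have e21 : ∀ a b : Fin k, (fun r => B₂ r a) ⬝ᵥ Itil.mulVec (fun r => B₁ r b) = -(S a b) := by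
    intro a b; rw [stmt9_key, hS21]; simp
  rw [Fintype.linearIndependent_iff]
  intro g hg
  simp only [Fin.sum_univ_four, Matrix.cons_val_zero, Matrix.cons_val_one, Matrix.head_cons,
    Matrix.cons_val_two, Matrix.tail_cons, Matrix.cons_val_three, Matrix.head_fin_const] at hg
  have pair : ∀ w : Fin m → ℝ,
      g 0 * ((fun r => B₁ r j) ⬝ᵥ Itil.mulVec w)
      + g 1 * ((fun r => B₁ r i) ⬝ᵥ Itil.mulVec w)
      + g 2 * ((fun r => B₂ r j) ⬝ᵥ Itil.mulVec w)
      + g 3 * ((fun r => B₂ r i) ⬝ᵥ Itil.mulVec w) = 0 := by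
    intro w
    have h0 : (g 0 • (fun r => B₁ r j) + g 1 • (fun r => B₁ r i)
        + g 2 • (fun r => B₂ r j) + g 3 • (fun r => B₂ r i)) ⬝ᵥ Itil.mulVec w = 0 := by
      rw [hg]; simp
    simpa [add_dotProduct, smul_dotProduct, smul_eq_mul] using h0
  have p1 := pair (fun r => B₁ r i)
  have p2 := pair (fun r => B₁ r j)
  have p3 := pair (fun r => B₂ r j)
  have p4 := pair (fun r => B₂ r i)
  simp only [e11, e22, e12, e21, hSji, hSii, hSjj, ← hαdef, mul_zero, zero_add, add_zero,
    mul_neg, neg_neg, neg_zero] at p1 p2 p3 p4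
  have hg2 : g 2 = 0 := by
    rcases mul_eq_zero.mp p1 with h | h
    · exact h
    · exact absurd h hαne
  have hg3 : g 3 = 0 := by
    have : g 3 * α = 0 := by linarith
    rcases mul_eq_zero.mp this with h | h
    · exact h
    · exact absurd h hαne
  have hg1 : g 1 = 0 := by
    rcases mul_eq_zero.mp p3 with h | h
    · exact h
    · exact absurd h hαne
  have hg0 : g 0 = 0 := by
    have : g 0 * α = 0 := by linarith
    rcases mul_eq_zero.mp this with h | h
    · exact h
    · exact absurd h hαne
  intro x
  fin_cases x <;> assumption
end

section
/- Let Ĩ be an invertible symmetric m×m matrix and B₁, B₂ ∈ ℝ^{m×k} with B₁ᵀĨB₁ = 0, B₂ᵀĨB₂ = 0, B₁ᵀĨB₂ skew-symmetric and B₁ᵀĨB₂ ≠ 0. Then m ≥ 4 and k ≥ 2. -/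
open Matrix

private lemma entry_eq {k m : ℕ} (Itil : Matrix (Fin m) (Fin m) ℝ)
    (M N : Matrix (Fin m) (Fin k) ℝ) (p q : Fin k) :
    (Mᵀ * Itil * N) p q = (fun r => M r p) ⬝ᵥ Itil *ᵥ (fun r => N r q) := by
  simp only [Matrix.mul_apply, Matrix.mulVec, Matrix.transpose_apply, dotProduct,
    Finset.sum_mul, Finset.mul_sum]
  rw [Finset.sum_comm]
  apply Finset.sum_congr rfl
  intro r _
  apply Finset.sum_congr rfl
  intro s _
  ring

/-- If `Ĩ` is an invertible symmetric `m×m` matrix and `B₁, B₂` are `m×k`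
matrices with `B₁ᵀĨB₁ = 0`, `B₂ᵀĨB₂ = 0`, `B₁ᵀĨB₂` skew-symmetric and
`B₁ᵀĨB₂ ≠ 0`, then `m ≥ 4` and `k ≥ 2`. -/
theorem stmt10 {k m : ℕ} (Itil : Matrix (Fin m) (Fin m) ℝ)
    (hItilSymm : Itilᵀ = Itil) (hItilInv : IsUnit Itil.det)
    (B₁ B₂ : Matrix (Fin m) (Fin k) ℝ)
    (h₁ : B₁ᵀ * Itil * B₁ = 0) (h₂ : B₂ᵀ * Itil * B₂ = 0)
    (hskew : (B₁ᵀ * Itil * B₂)ᵀ = -(B₁ᵀ * Itil * B₂))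
    (hne : B₁ᵀ * Itil * B₂ ≠ 0) :
    4 ≤ m ∧ 2 ≤ k := by
  set S := B₁ᵀ * Itil * B₂ with hSdef
  -- find a nonzero entry
  have hex : ∃ i j, S i j ≠ 0 := by
    by_contra h
    push_neg at h
    exact hne (by ext i j; exact h i j)
  obtain ⟨i, j, hs⟩ := hex
  -- diagonal of S vanishes
  have hdiag : ∀ p, S p p = 0 := by
    intro p
    have := congrFun (congrFun hskew p) p
    simp only [Matrix.transpose_apply, Matrix.neg_apply] at this
    linarith
  have hij : i ≠ j := fun h => hs (h ▸ hdiag i)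
  have hk : 2 ≤ k := by
    have h1 := i.isLt
    have h2 := j.isLt
    have : i.val ≠ j.val := fun h => hij (Fin.ext h)
    omega
  -- transpose relation
  have htr : B₂ᵀ * Itil * B₁ = -S := by
    rw [← hskew, hSdef]
    rw [Matrix.transpose_mul, Matrix.transpose_mul, Matrix.transpose_transpose,
      hItilSymm, Matrix.mul_assoc]
  -- the four column vectors
  set a : Fin m → ℝ := fun r => B₁ r i with ha
  set b : Fin m → ℝ := fun r => B₁ r j with hb
  set c : Fin m → ℝ := fun r => B₂ r i with hc
  set d : Fin m → ℝ := fun r => B₂ r j with hd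
  have E11 : ∀ p q, (fun r => B₁ r p) ⬝ᵥ Itil *ᵥ (fun r => B₁ r q) = 0 := by
    intro p q; rw [← entry_eq, h₁]; simp
  have E22 : ∀ p q, (fun r => B₂ r p) ⬝ᵥ Itil *ᵥ (fun r => B₂ r q) = 0 := by
    intro p q; rw [← entry_eq, h₂]; simp
  have E12 : ∀ p q, (fun r => B₁ r p) ⬝ᵥ Itil *ᵥ (fun r => B₂ r q) = S p q := by
    intro p q; rw [← entry_eq]
  have E21 : ∀ p q, (fun r => B₂ r p) ⬝ᵥ Itil *ᵥ (fun r => B₁ r q) = -S p q := by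
    intro p q; rw [← entry_eq, htr]; simp
  have hSji : S j i = -S i j := by
    have := congrFun (congrFun hskew i) j
    simpa using this
  have hli : LinearIndependent ℝ ![a, b, c, d] := by
    rw [Fintype.linearIndependent_iff]
    intro g hg
    rw [Fin.sum_univ_four] at hg
    simp only [Matrix.cons_val_zero, Matrix.cons_val_one, Matrix.head_cons,
      Matrix.cons_val_two, Matrix.tail_cons, Matrix.cons_val_three] at hg
    have key : ∀ w : Fin m → ℝ,
        g 0 * (a ⬝ᵥ Itil *ᵥ w) + g 1 * (b ⬝ᵥ Itil *ᵥ w)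
        + g 2 * (c ⬝ᵥ Itil *ᵥ w) + g 3 * (d ⬝ᵥ Itil *ᵥ w) = 0 := by
      intro w
      have := congrArg (fun v => v ⬝ᵥ Itil *ᵥ w) hg
      simpa [add_dotProduct, smul_dotProduct, smul_eq_mul] using this
    have k1 := key a
    have k2 := key b
    have k3 := key c
    have k4 := key d
    rw [ha, hb, hc, hd] at k1 k2 k3 k4
    rw [E11, E11, E21, E21] at k1 k2
    rw [E12, E12, E22, E22] at k3 k4
    simp only [hdiag i, hdiag j, hSji] at k1 k2 k3 k4
    have e3 : g 3 = 0 := (mul_eq_zero.mp (by linarith : g 3 * S i j = 0)).resolve_right hs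
    have e2 : g 2 = 0 := (mul_eq_zero.mp (by linarith : g 2 * S i j = 0)).resolve_right hs
    have e1 : g 1 = 0 := (mul_eq_zero.mp (by linarith : g 1 * S i j = 0)).resolve_right hs
    have e0 : g 0 = 0 := (mul_eq_zero.mp (by linarith : g 0 * S i j = 0)).resolve_right hs
    intro l
    fin_cases l <;> assumption
  have hcard := hli.fintype_card_le_finrank
  simp only [Fintype.card_fin, Module.finrank_fin_fun] at hcard
  exact ⟨hcard, hk⟩
end

section
/- Dimension bound: Let Γ be a group of affine maps of ℝⁿ of the form (I+A,v) where each A is skew-symmetric with respect to a nondegenerate symmetric bilinear form, A² = 0, triple products of the A's vanish (A₁A₂A₃=0), and (A₁+A₂)² = 0 for sums of any two. If there exist elements with A₁A₂ ≠ 0, then n ≥ 8. -/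
/-!
Put `P = A₁A₂`. The relations make `A₂A₁ = -P`, so `P` is skew, and `P` kills the images of
`A₁`, `A₂` and `P`. Pick `x, y` with `⟨Px, y⟩ ≠ 0`; the alternating form `⟨P·, ·⟩` is then
nondegenerate on `W = span {x, y}`, and `(u₀, u₁, u₂, u₃) ↦ u₀ + A₁u₁ + A₂u₂ + Pu₃` is injective
on `W⁴`. Hence `n ≥ 4 · dim W = 8`.
-/

open Module LinearMap Submodule

theorem mul_eq_neg_mul_of_add_mul_self_eq_zero {R : Type*} [Ring R] {a b : R}
    (ha : a * a = 0) (hb : b * b = 0) (hab : (a + b) * (a + b) = 0) : b * a = -(a * b) := by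
  rw [add_mul, mul_add, mul_add, ha, hb, zero_add, add_zero] at hab
  exact eq_neg_of_add_eq_zero_left ((add_comm _ _).trans hab)

namespace LinearMap

variable {K V : Type*} [Field K] [AddCommGroup V] [Module K V] {B : LinearMap.BilinForm K V}

theorem isSkewAdjoint_iff_apply {f : Module.End K V} :
    B.IsSkewAdjoint f ↔ ∀ x y, B (f x) y = -B x (f y) := by
  simp only [IsSkewAdjoint, IsAdjointPair, Pi.neg_apply, map_neg]

theorem IsSkewAdjoint.apply_eq_zero_of_apply_eq_zero {f : Module.End K V}
    (hf : B.IsSkewAdjoint f) (w : V) {v : V} (hv : f v = 0) : B (f w) v = 0 := by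
  rw [isSkewAdjoint_iff_apply.mp hf, hv, map_zero, neg_zero]

theorem IsSkewAdjoint.mul_of_anticomm {c d : Module.End K V} (hc : B.IsSkewAdjoint c)
    (hd : B.IsSkewAdjoint d) (hdc : d * c = -(c * d)) : B.IsSkewAdjoint (c * d) := by
  have h := IsAdjointPair.mul (g := -c) (g' := -d) hc hd
  rwa [neg_mul_neg, hdc] at h

theorem IsSkewAdjoint.apply_self_eq_zero [NeZero (2 : K)] (hB : B.IsSymm) {f : Module.End K V}
    (hf : B.IsSkewAdjoint f) (x : V) : B (f x) x = 0 := by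
  have h := isSkewAdjoint_iff_apply.mp hf x x
  rw [hB.eq x (f x)] at h
  have h2 : (2 : K) * B (f x) x = 0 := by linear_combination h
  exact (mul_eq_zero.mp h2).resolve_left two_ne_zero

section Anticommuting

variable (c d : Module.End K V) (W : Submodule K V)

def sumOfProducts : W × W × W × W →ₗ[K] V :=
  W.subtype.coprod ((c ∘ₗ W.subtype).coprod ((d ∘ₗ W.subtype).coprod ((c * d) ∘ₗ W.subtype)))

variable {c d W}

/-- Pairing with `c d W` reads off `u₀`; then `c` and `d` isolate `c d u₂` and `-c d u₁`,
and `c d` is injective on `W`. -/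
theorem injective_sumOfProducts (hcd : B.IsSkewAdjoint (c * d)) (hc : c * c = 0)
    (hd : d * d = 0) (hdc : d * c = -(c * d)) (hcdc : c * d * c = 0) (hdcd : d * c * d = 0)
    (hW : ∀ u ∈ W, (∀ w ∈ W, B ((c * d) w) u = 0) → u = 0) :
    Function.Injective (sumOfProducts c d W) := by
  set P := c * d
  have hcc v : c (c v) = 0 := LinearMap.congr_fun hc v
  have hPc v : P (c v) = 0 := LinearMap.congr_fun hcdc v
  have hPd v : P (d v) = 0 := by
    show c (d (d v)) = 0
    rw [← Module.End.mul_apply d, hd, zero_apply, map_zero]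
  have hPP v : P (P v) = 0 := hPc (d v)
  have hcP v : c (P v) = 0 := hcc (d v)
  have hdP v : d (P v) = 0 := LinearMap.congr_fun hdcd v
  have hdc' v : d (c v) = -P v := LinearMap.congr_fun hdc v
  have hPW : ∀ u ∈ W, P u = 0 → u = 0 := fun u hu h =>
    hW u hu fun w _ => hcd.apply_eq_zero_of_apply_eq_zero w h
  rw [injective_iff_map_eq_zero]
  rintro ⟨⟨u₀, h₀⟩, ⟨u₁, h₁⟩, ⟨u₂, h₂⟩, ⟨u₃, h₃⟩⟩ h
  change u₀ + (c u₁ + (d u₂ + P u₃)) = 0 at h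
  obtain rfl : u₀ = 0 := hW u₀ h₀ fun w _ => by
    have := congrArg (B (P w)) h
    rwa [map_add, map_add, map_add, hcd.apply_eq_zero_of_apply_eq_zero w (hPc u₁),
      hcd.apply_eq_zero_of_apply_eq_zero w (hPd u₂),
      hcd.apply_eq_zero_of_apply_eq_zero w (hPP u₃), map_zero, add_zero, add_zero,
      add_zero] at this
  obtain rfl : u₂ = 0 := hPW u₂ h₂ <| show c (d u₂) = 0 by
    simpa only [map_add, map_zero, hcc, hcP, zero_add, add_zero] using congrArg c h
  rw [map_zero, zero_add, zero_add] at h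
  obtain rfl : u₁ = 0 := hPW u₁ h₁ <| by
    simpa only [map_add, map_zero, hdc', hdP, add_zero, neg_eq_zero] using congrArg d h
  rw [map_zero, zero_add] at h
  obtain rfl : u₃ = 0 := hPW u₃ h₃ h
  rfl

theorem four_mul_finrank_le_finrank [FiniteDimensional K V] (hcd : B.IsSkewAdjoint (c * d))
    (hc : c * c = 0) (hd : d * d = 0) (hdc : d * c = -(c * d)) (hcdc : c * d * c = 0)
    (hdcd : d * c * d = 0) (hW : ∀ u ∈ W, (∀ w ∈ W, B ((c * d) w) u = 0) → u = 0) :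
    4 * finrank K W ≤ finrank K V := by
  have := LinearMap.finrank_le_finrank_of_injective
    (injective_sumOfProducts hcd hc hd hdc hcdc hdcd hW)
  simp only [Module.finrank_prod] at this
  omega

end Anticommuting

section SpanPair

variable [NeZero (2 : K)] {P : Module.End K V} {x y : V}

theorem eq_zero_of_apply_smul_add_smul_eq_zero (hB : B.IsSymm) (hP : B.IsSkewAdjoint P)
    (hxy : B (P x) y ≠ 0) {a b : K} (hx : B (P x) (a • x + b • y) = 0)
    (hy : B (P y) (a • x + b • y) = 0) : a = 0 ∧ b = 0 := by
  have hyx : B (P y) x = -B (P x) y := by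
    rw [isSkewAdjoint_iff_apply.mp hP, hB.eq]
  simp only [map_add, map_smul, smul_eq_mul, hP.apply_self_eq_zero hB, hyx] at hx hy
  constructor
  · simpa [hxy] using hy
  · simpa [hxy] using hx

theorem finrank_span_pair_eq_two (hB : B.IsSymm) (hP : B.IsSkewAdjoint P)
    (hxy : B (P x) y ≠ 0) : finrank K (span K {x, y}) = 2 := by
  have hli : LinearIndependent K ![x, y] := LinearIndependent.pair_iff.mpr fun s t h =>
    eq_zero_of_apply_smul_add_smul_eq_zero hB hP hxy (by rw [h, map_zero]) (by rw [h, map_zero])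
  have := finrank_span_eq_card hli
  rwa [Matrix.range_cons_cons_empty, Fintype.card_fin] at this

theorem eq_zero_of_forall_mem_span_pair (hB : B.IsSymm) (hP : B.IsSkewAdjoint P)
    (hxy : B (P x) y ≠ 0) : ∀ u ∈ span K {x, y}, (∀ w ∈ span K {x, y}, B (P w) u = 0) → u = 0 := by
  intro u hu h
  obtain ⟨a, b, rfl⟩ := mem_span_pair.mp hu
  obtain ⟨rfl, rfl⟩ := eq_zero_of_apply_smul_add_smul_eq_zero hB hP hxy
    (h x (subset_span (by simp))) (h y (subset_span (by simp)))
  simp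

end SpanPair

theorem eight_le_finrank [FiniteDimensional K V] [NeZero (2 : K)] (hB : B.IsSymm)
    (hB' : B.SeparatingLeft) {c d : Module.End K V} (hc : B.IsSkewAdjoint c)
    (hd : B.IsSkewAdjoint d) (hcc : c * c = 0) (hdd : d * d = 0) (hcd : (c + d) * (c + d) = 0)
    (hcdc : c * d * c = 0) (hdcd : d * c * d = 0) (hne : c * d ≠ 0) : 8 ≤ finrank K V := by
  have hdc := mul_eq_neg_mul_of_add_mul_self_eq_zero hcc hdd hcd
  have hP := hc.mul_of_anticomm hd hdc
  obtain ⟨x, hx⟩ : ∃ x, (c * d) x ≠ 0 := by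
    by_contra! h
    exact hne (LinearMap.ext h)
  obtain ⟨y, hxy⟩ : ∃ y, B ((c * d) x) y ≠ 0 := by
    by_contra! h
    exact hx (hB' _ h)
  have := four_mul_finrank_le_finrank hP hcc hdd hdc hcdc hdcd
    (eq_zero_of_forall_mem_span_pair hB hP hxy)
  rw [finrank_span_pair_eq_two hB hP hxy] at this
  omega

end LinearMap

theorem stmt11_general {n : ℕ}
    (B : LinearMap.BilinForm ℝ (Fin n → ℝ))
    (hsymm : ∀ x y, B x y = B y x)
    (hnd : B.Nondegenerate)
    (Γ : Subgroup ((Fin n → ℝ) ≃ᵃ[ℝ] (Fin n → ℝ)))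
    (A : ((Fin n → ℝ) ≃ᵃ[ℝ] (Fin n → ℝ)) → ((Fin n → ℝ) →ₗ[ℝ] (Fin n → ℝ)))
    (hskew : ∀ γ ∈ Γ, ∀ x y, B (A γ x) y = - B x (A γ y))
    (hA2 : ∀ γ ∈ Γ, A γ ∘ₗ A γ = 0)
    (htriple : ∀ γ₁ ∈ Γ, ∀ γ₂ ∈ Γ, ∀ γ₃ ∈ Γ, A γ₁ ∘ₗ A γ₂ ∘ₗ A γ₃ = 0)
    (hsum : ∀ γ₁ ∈ Γ, ∀ γ₂ ∈ Γ, (A γ₁ + A γ₂) ∘ₗ (A γ₁ + A γ₂) = 0)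
    (hnonab : ∃ γ₁ ∈ Γ, ∃ γ₂ ∈ Γ, A γ₁ ∘ₗ A γ₂ ≠ 0) :
    8 ≤ n := by
  obtain ⟨γ₁, hγ₁, γ₂, hγ₂, hne⟩ := hnonab
  have := LinearMap.eight_le_finrank (c := A γ₁) (d := A γ₂) ⟨hsymm⟩ hnd.1
    (LinearMap.isSkewAdjoint_iff_apply.mpr (hskew γ₁ hγ₁))
    (LinearMap.isSkewAdjoint_iff_apply.mpr (hskew γ₂ hγ₂)) (hA2 γ₁ hγ₁) (hA2 γ₂ hγ₂)
    (hsum γ₁ hγ₁ γ₂ hγ₂) (htriple γ₁ hγ₁ γ₂ hγ₂ γ₁ hγ₁) (htriple γ₂ hγ₂ γ₁ hγ₁ γ₂ hγ₂) hne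
  rwa [Module.finrank_fin_fun] at this

/-- Dimension bound: let `Γ` be a group of affine isometries `(I+A, v)` of a
nondegenerate symmetric bilinear form on `ℝⁿ`, with each `A` skew-symmetric,
`A² = 0`, vanishing triple products `A₁A₂A₃ = 0`, and `(A₁+A₂)² = 0` for any
two elements. If `A₁A₂ ≠ 0` for some pair (non-abelian linear holonomy), then
`n ≥ 8`. -/
theorem stmt11 {n : ℕ}
    (B : LinearMap.BilinForm ℝ (Fin n → ℝ))
    (hsymm : ∀ x y, B x y = B y x)
    (hnd : B.Nondegenerate)
    (Γ : Subgroup ((Fin n → ℝ) ≃ᵃ[ℝ] (Fin n → ℝ)))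
    (A : ((Fin n → ℝ) ≃ᵃ[ℝ] (Fin n → ℝ)) → ((Fin n → ℝ) →ₗ[ℝ] (Fin n → ℝ)))
    (hA : ∀ γ, A γ = (γ.linear : (Fin n → ℝ) →ₗ[ℝ] (Fin n → ℝ)) - LinearMap.id)
    (hiso : ∀ γ ∈ Γ, ∀ x y, B (γ.linear x) (γ.linear y) = B x y)
    (hskew : ∀ γ ∈ Γ, ∀ x y, B (A γ x) y = - B x (A γ y))
    (hA2 : ∀ γ ∈ Γ, A γ ∘ₗ A γ = 0)
    (htriple : ∀ γ₁ ∈ Γ, ∀ γ₂ ∈ Γ, ∀ γ₃ ∈ Γ, A γ₁ ∘ₗ A γ₂ ∘ₗ A γ₃ = 0)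
    (hsum : ∀ γ₁ ∈ Γ, ∀ γ₂ ∈ Γ, (A γ₁ + A γ₂) ∘ₗ (A γ₁ + A γ₂) = 0)
    (hnonab : ∃ γ₁ ∈ Γ, ∃ γ₂ ∈ Γ, A γ₁ ∘ₗ A γ₂ ≠ 0) :
    8 ≤ n :=
  stmt11_general B hsymm hnd Γ A hskew hA2 htriple hsum hnonab
end

section
/- Let a be an abelian Lie algebra and ω ∈ Z²(a, a*) a 2-cocycle such that the trilinear form F_ω(X₁,X₂,X₃) = ω(X₁,X₂)(X₃) is alternating. Then the vector space a ⊕ a* with bracket [(X,X*),(Y,Y*)] = (0, ω(X,Y)) is a 2-step nilpotent Lie algebra, and the split-signature inner product ⟨(X,X*),(Y,Y*)⟩ = X*(Y) + Y*(X) is ad-invariant on it. -/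
/-- Let `a` be a finite-dimensional real vector space (an abelian Lie algebra)
and `ω : a × a → a*` an alternating bilinear 2-cocycle such that
`F_ω(X₁,X₂,X₃) = ω(X₁,X₂)(X₃)` is alternating. Then `a ⊕ a*` with bracket
`[(X,X*),(Y,Y*)] = (0, ω(X,Y))` is a 2-step nilpotent Lie algebra (the bracket
is alternating, satisfies the Jacobi identity, and all double brackets vanish),
and the split inner product `⟨(X,X*),(Y,Y*)⟩ = X*(Y) + Y*(X)` is ad-invariant. -/
theorem stmt14 {a : Type*} [AddCommGroup a] [Module ℝ a] [FiniteDimensional ℝ a]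
    (ω : a →ₗ[ℝ] a →ₗ[ℝ] Module.Dual ℝ a)
    (halt : ∀ X : a, ω X X = 0)
    (hFalt : ∀ X Y Z : a, ω X Y Z = - ω X Z Y)
    (br : (a × Module.Dual ℝ a) → (a × Module.Dual ℝ a) → (a × Module.Dual ℝ a))
    (hbr : ∀ u v, br u v = (0, ω u.1 v.1))
    (ip : (a × Module.Dual ℝ a) → (a × Module.Dual ℝ a) → ℝ)
    (hip : ∀ u v, ip u v = u.2 v.1 + v.2 u.1) :
    (∀ u, br u u = 0) ∧
    (∀ u v w, br u (br v w) + br v (br w u) + br w (br u v) = 0) ∧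
    (∀ u v w, br u (br v w) = 0) ∧
    (∀ u v w, ip (br u v) w = - ip v (br u w)) := by
  have hdb : ∀ u v w, br u (br v w) = 0 := by
    intro u v w
    rw [hbr, hbr]
    simp
  refine ⟨?_, ?_, hdb, ?_⟩
  · intro u; rw [hbr, halt]; rfl
  · intro u v w; rw [hdb, hdb, hdb]; simp
  · intro u v w
    rw [hbr, hbr, hip, hip]
    simp only [Prod.fst, Prod.snd]; simpa using hFalt u.1 v.1 w.1
end

section
/- Let Γ be a group of affine maps (I+A,v) of ℝⁿ preserving a nondegenerate symmetric bilinear form, with each A skew-symmetric, A² = 0, and suppose each central element γ=(I+A,v) of Γ satisfies AB = 0 for all B ∈ log(hol(Γ)). Then U_Δ ⊆ U₀, where Δ = Z(Γ), U_Δ = Σ_{δ∈Δ} im(A_δ), U_Γ = Σ_{γ∈Γ} im(A_γ), U₀ = U_Γ ∩ U_Γ^⊥. -/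
/-- `U_Δ ⊆ U₀` where `Δ = Z(Γ)`, `U_Δ = Σ_{δ∈Δ} im A_δ`,
`U_Γ = Σ_{γ∈Γ} im A_γ` and `U₀ = U_Γ ∩ U_Γ^⊥`, for a group `Γ` of affine
isometries `(I+A, v)` of a nondegenerate symmetric bilinear form, with each
`A` skew-symmetric, `A² = 0`, and the nilpotent part of each central element
annihilating all nilpotent parts. -/
theorem stmt15 {n : ℕ}
    (B : LinearMap.BilinForm ℝ (Fin n → ℝ))
    (hsymm : ∀ x y, B x y = B y x)
    (hnd : B.Nondegenerate)
    (Γ : Subgroup ((Fin n → ℝ) ≃ᵃ[ℝ] (Fin n → ℝ)))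
    (A : ((Fin n → ℝ) ≃ᵃ[ℝ] (Fin n → ℝ)) → ((Fin n → ℝ) →ₗ[ℝ] (Fin n → ℝ)))
    (hA : ∀ γ, A γ = (γ.linear : (Fin n → ℝ) →ₗ[ℝ] (Fin n → ℝ)) - LinearMap.id)
    (hiso : ∀ γ ∈ Γ, ∀ x y, B (γ.linear x) (γ.linear y) = B x y)
    (hskew : ∀ γ ∈ Γ, ∀ x y, B (A γ x) y = - B x (A γ y))
    (hA2 : ∀ γ ∈ Γ, A γ ∘ₗ A γ = 0)
    (central : ((Fin n → ℝ) ≃ᵃ[ℝ] (Fin n → ℝ)) → Prop)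
    (hcentral : ∀ γ, central γ ↔ (γ ∈ Γ ∧ ∀ δ ∈ Γ, γ * δ = δ * γ))
    (hcentralA : ∀ γ₁, central γ₁ → ∀ γ₂ ∈ Γ, A γ₁ ∘ₗ A γ₂ = 0)
    (UΓ UΔ U₀ : Submodule ℝ (Fin n → ℝ))
    (hUΓ : UΓ = ⨆ γ ∈ Γ, LinearMap.range (A γ))
    (hUΔ : UΔ = ⨆ γ ∈ {γ | central γ}, LinearMap.range (A γ))
    (hU₀ : U₀ = UΓ ⊓ B.orthogonal UΓ) :
    UΔ ≤ U₀ := by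
  subst hUΔ hU₀ hUΓ
  refine iSup₂_le fun δ hδ => le_inf ?_ ?_
  · exact le_iSup₂_of_le δ ((hcentral δ).mp hδ).1 le_rfl
  · rintro x ⟨u, rfl⟩
    intro y hy
    have key : (⨆ γ ∈ Γ, LinearMap.range (A γ)) ≤ LinearMap.ker (B.flip (A δ u)) := by
      refine iSup₂_le fun γ hγ => ?_
      rintro _ ⟨v, rfl⟩
      have h3 : A δ (A γ v) = 0 := by
        have := hcentralA δ hδ γ hγ
        exact congrFun (congrArg DFunLike.coe this) v
      show B ((A γ) v) ((A δ) u) = 0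
      rw [hsymm, hskew δ ((hcentral δ).mp hδ).1, h3, map_zero, neg_zero]
    exact key hy
end

section
/- For skew-symmetric (with respect to a nondegenerate symmetric bilinear form) endomorphisms A of ℝⁿ with A²=0 belonging to a family closed under the relations A₁A₂A₃ = 0, one has U₀ = Σ_A im A ∩ ∩_A ker A, i.e., the radical of U_Γ equals the intersection of the total image with the common kernel. -/
/-!
Skewness moves `A` across the form, `B (A y) x = -B y (A x)`, so `x` is orthogonal to `im A`
exactly when `A x` is orthogonal to everything, i.e. (by nondegeneracy) when `A x = 0`.
Hence `U_Γ^⊥ = ⋂_A (im A)^⊥ = ⋂_A ker A`, and intersecting with `U_Γ` gives the claim.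
-/

namespace LinearMap.BilinForm

theorem orthogonal_iSup {R M : Type*} [CommSemiring R] [AddCommMonoid M] [Module R M]
    (B : LinearMap.BilinForm R M) {ι : Sort*} (p : ι → Submodule R M) :
    B.orthogonal (⨆ i, p i) = ⨅ i, B.orthogonal (p i) := by
  ext x
  simp only [Submodule.mem_iInf, mem_orthogonal_iff]
  exact iSup_le_iff (f := p) (a := LinearMap.ker (B.flip x))

theorem orthogonal_range_eq_ker {R M : Type*} [CommRing R] [AddCommGroup M] [Module R M]
    (B : LinearMap.BilinForm R M) (hB : B.SeparatingRight) {A : M →ₗ[R] M}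
    (hA : ∀ x y, B (A x) y = -B x (A y)) : B.orthogonal (range A) = ker A := by
  ext x
  rw [mem_orthogonal_iff, mem_ker]
  constructor
  · intro hx
    exact hB (A x) fun y => neg_eq_zero.mp (by rw [← hA]; exact hx _ ⟨y, rfl⟩)
  · rintro hx _ ⟨y, rfl⟩
    rw [hA, hx, map_zero, neg_zero]

end LinearMap.BilinForm

open LinearMap.BilinForm in
theorem stmt16_general {n : ℕ}
    (B : LinearMap.BilinForm ℝ (Fin n → ℝ))
    (hnd : B.Nondegenerate)
    (𝒜 : Set ((Fin n → ℝ) →ₗ[ℝ] (Fin n → ℝ)))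
    (hskew : ∀ A ∈ 𝒜, ∀ x y, B (A x) y = - B x (A y))
    (UΓ U₀ : Submodule ℝ (Fin n → ℝ))
    (hUΓ : UΓ = ⨆ A ∈ 𝒜, LinearMap.range A)
    (hU₀ : U₀ = UΓ ⊓ B.orthogonal UΓ) :
    U₀ = UΓ ⊓ (⨅ A ∈ 𝒜, LinearMap.ker A) := by
  have hperp : B.orthogonal UΓ = ⨅ A ∈ 𝒜, LinearMap.ker A := by
    simp only [hUΓ, orthogonal_iSup]
    exact biInf_congr fun A hA => B.orthogonal_range_eq_ker hnd.2 (hskew A hA)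
  rw [hU₀, hperp]

/-- `U₀ = Σ_A im A ∩ ∩_A ker A`: for a family `𝒜` of skew-symmetric
endomorphisms with `A² = 0` (hence `im A = (ker A)^⊥`) and vanishing triple
products, the radical of `U_Γ` equals the intersection of the total image with
the common kernel. -/
theorem stmt16 {n : ℕ}
    (B : LinearMap.BilinForm ℝ (Fin n → ℝ))
    (hsymm : ∀ x y, B x y = B y x)
    (hnd : B.Nondegenerate)
    (𝒜 : Set ((Fin n → ℝ) →ₗ[ℝ] (Fin n → ℝ)))
    (hskew : ∀ A ∈ 𝒜, ∀ x y, B (A x) y = - B x (A y))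
    (hA2 : ∀ A ∈ 𝒜, A ∘ₗ A = 0)
    (htriple : ∀ A ∈ 𝒜, ∀ A' ∈ 𝒜, ∀ A'' ∈ 𝒜, A ∘ₗ A' ∘ₗ A'' = 0)
    (UΓ U₀ : Submodule ℝ (Fin n → ℝ))
    (hUΓ : UΓ = ⨆ A ∈ 𝒜, LinearMap.range A)
    (hU₀ : U₀ = UΓ ⊓ B.orthogonal UΓ) :
    U₀ = UΓ ⊓ (⨅ A ∈ 𝒜, LinearMap.ker A) :=
  stmt16_general B hnd 𝒜 hskew UΓ U₀ hUΓ hU₀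
end
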